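/- Let q and p be nonzero anisotropic quasilinear quadratic forms over a field F of characteristic 2. Then q is divisible by the norm form of p if and only if the anisotropic part (q ⊗ p)_an is similar to q. -/

import Mathlib

open scoped BigOperators

namespace QLin

variable (K : Type) [Field K]

/-- Value of the diagonal (quasilinear) quadratic form with coefficients `d` at the vector `v`. -/
def qf {n : ℕ} (d : Fin n → K) (v : Fin n → K) : K := ∑ i, d i * v i ^ 2

/-- The set `D(q)` of values represented by the diagonal form `d`. -/
def Dset {n : ℕ} (d : Fin n → K) : Set K := Set.range (qf K d)

/-- A diagonal quadratic form is anisotropic if it has no nontrivial zero. -/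
def Anis {n : ℕ} (d : Fin n → K) : Prop := ∀ v : Fin n → K, qf K d v = 0 → v = 0

/-- The isotropy index `i₀`: the maximal dimension of a totally isotropic subspace. -/
noncomputable def i0 {n : ℕ} (d : Fin n → K) : ℕ :=
  sSup {m | ∃ W : Submodule K (Fin n → K), (∀ v ∈ W, qf K d v = 0) ∧ Module.finrank K W = m}

/-- Isometry of two diagonal quadratic forms (possibly of different ambient dimensions;
an isometry forces the dimensions to agree). -/
def Isom {n m : ℕ} (d : Fin n → K) (e : Fin m → K) : Prop :=
  ∃ φ : (Fin n → K) ≃ₗ[K] (Fin m → K), ∀ v, qf K e (φ v) = qf K d v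

/-- `r` is a subform of `q` : `q ≅ r ⊥ s` for some form `s`. -/
def Subform {n m : ℕ} (r : Fin n → K) (q : Fin m → K) : Prop :=
  ∃ (k : ℕ) (s : Fin k → K), Isom K q (Fin.append r s)

/-- `d` is similar to `e` : `e ≅ a • d` for some `a ≠ 0`. -/
def Similar {n m : ℕ} (d : Fin n → K) (e : Fin m → K) : Prop :=
  ∃ a : K, a ≠ 0 ∧ Isom K (fun i => a * d i) e

/-- `d` is similar to a subform of `q`. -/
def SimSubform {n m : ℕ} (d : Fin n → K) (q : Fin m → K) : Prop :=
  ∃ a : K, a ≠ 0 ∧ Subform K (fun i => a * d i) q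

/-- Tensor product of diagonal quadratic forms. -/
def tens {n m : ℕ} (d : Fin n → K) (e : Fin m → K) : Fin (n * m) → K :=
  fun k => d (finProdFinEquiv.symm k).1 * e (finProdFinEquiv.symm k).2

/-- `q` is divisible by `π` : `q ≅ π ⊗ r` for some form `r`. -/
def Divisible {n m : ℕ} (π : Fin n → K) (q : Fin m → K) : Prop :=
  ∃ (k : ℕ) (r : Fin k → K), Isom K q (tens K π r)

/-- The diagonal coefficients of the `s`-fold quasi-Pfister form `⟨⟨a₁,…,a_s⟩⟩ =
`⟨1,a₁⟩ ⊗ ⋯ ⊗ ⟨1,a_s⟩`: the products of the `a i` over all subsets of the index set. -/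
def qPfister {s : ℕ} (a : Fin s → K) : Fin (2 ^ s) → K :=
  fun j => ∏ i : Fin s, if Nat.testBit (j : ℕ) (i : ℕ) then a i else 1

/-- `r` is (a representative of) the anisotropic part of `q`:
`r` is anisotropic and `q ≅ i₀(q)·⟨0⟩ ⊥ r`. -/
def IsAnisPart {n m : ℕ} (r : Fin n → K) (q : Fin m → K) : Prop :=
  Anis K r ∧ ∃ k : ℕ, Isom K q (Fin.append (fun _ : Fin k => (0 : K)) r)

/-- The divisibility index `𝔡₀(q)`: the largest `s` such that the anisotropic part of `q`
is divisible by an `s`-fold quasi-Pfister form. -/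
noncomputable def d0 {n : ℕ} (q : Fin n → K) : ℕ :=
  sSup {s | ∃ a : Fin s → K, (∀ i, a i ≠ 0) ∧
    ∃ (k : ℕ) (r : Fin k → K), IsAnisPart K r q ∧ Divisible K (qPfister K a) r}

/-- The norm field `N(q)`: the smallest subfield of `K` containing all squares and all
ratios of nonzero represented values of `q`. -/
def normField {n : ℕ} (d : Fin n → K) : Subfield K :=
  Subfield.closure ((Set.range fun x : K => x ^ 2) ∪
    {z | ∃ a ∈ Dset K d, ∃ b ∈ Dset K d, b ≠ 0 ∧ z = a / b})

/-- `lndeg(q)`: the base-2 logarithm of the dimension of the norm form of `q`, i.e. the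
(unique, when `q` is nonzero) `s` such that some anisotropic `s`-fold quasi-Pfister form
represents exactly the elements of the norm field of `q`. -/
noncomputable def lndeg {n : ℕ} (d : Fin n → K) : ℕ :=
  sInf {s | ∃ a : Fin s → K, (∀ i, a i ≠ 0) ∧ Anis K (qPfister K a) ∧
    Dset K (qPfister K a) = (normField K d : Set K)}

/-- Base change of a diagonal quadratic form along a field extension `F → K`. -/
def bc (F : Type) [Field F] (K : Type) [Field K] [Algebra F K] {n : ℕ} (d : Fin n → F) :
    Fin n → K := fun i => algebraMap F K (d i)

/-- The defining polynomial of the standard affine chart of the projective quadric `{p = 0}`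
attached to a diagonal form `p` of dimension `n + 2` (dehomogenized at the last variable). -/
noncomputable def chartD (F : Type) [Field F] {n : ℕ} (d : Fin (n + 2) → F) :
    MvPolynomial (Fin (n + 1)) F :=
  (∑ i : Fin (n + 1), MvPolynomial.C (d i.castSucc) * MvPolynomial.X i ^ 2) +
    MvPolynomial.C (d (Fin.last (n + 1)))

/-- `K` is (realizes) the function field `F(p)` of the projective quadric `{p = 0}`:
`K` is generated over `F` by a point `x` of the affine chart of the quadric whose
ideal of relations is exactly the one generated by the defining equation. -/
def IsFunFld (F : Type) [Field F] {n : ℕ} (p : Fin (n + 2) → F) (K : Type) [Field K]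
    [Algebra F K] : Prop :=
  ∃ x : Fin (n + 1) → K,
    RingHom.ker (MvPolynomial.aeval x : MvPolynomial (Fin (n + 1)) F →ₐ[F] K) =
      Ideal.span {chartD F p} ∧
    ∀ z : K, ∃ a b : MvPolynomial (Fin (n + 1)) F,
      MvPolynomial.aeval x b ≠ 0 ∧ z * MvPolynomial.aeval x b = MvPolynomial.aeval x a

/-- The full diagonal polynomial of a diagonal form (the equation of the affine cone). -/
noncomputable def diagPoly (F : Type) [Field F] {n : ℕ} (d : Fin n → F) :
    MvPolynomial (Fin n) F :=
  ∑ i : Fin n, MvPolynomial.C (d i) * MvPolynomial.X i ^ 2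

/-- `M` is (realizes) the affine cone function field `F[p]`, i.e. the fraction field of
`F[T₁,…,Tₙ]/(p(T))`. -/
def IsAffFunFld (F : Type) [Field F] {n : ℕ} (p : Fin n → F) (M : Type) [Field M]
    [Algebra F M] : Prop :=
  ∃ x : Fin n → M,
    RingHom.ker (MvPolynomial.aeval x : MvPolynomial (Fin n) F →ₐ[F] M) =
      Ideal.span {diagPoly F p} ∧
    ∀ z : M, ∃ a b : MvPolynomial (Fin n) F,
      MvPolynomial.aeval x b ≠ 0 ∧ z * MvPolynomial.aeval x b = MvPolynomial.aeval x a

/-- `L` is a purely transcendental field extension of `F`. -/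
def IsPurelyTransc (F L : Type) [Field F] [Field L] [Algebra F L] : Prop :=
  ∃ s : Set L, AlgebraicIndependent F (Subtype.val : s → L) ∧
    IntermediateField.adjoin F s = ⊤

end QLin
namespace QLin2
open QLin

variable {F : Type} [Field F]

theorem add_sq2 (h2 : (2 : F) = 0) (x y : F) : (x + y)^2 = x^2 + y^2 := by
  have h : (2:F) * x * y = 0 := by rw [h2]; ring
  rw [add_sq, h]; ring

theorem neg_eq_self2 (h2 : (2 : F) = 0) (x : F) : -x = x := by
  have : x + x = 0 := by rw [← two_mul, h2, zero_mul]
  linear_combination -this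

theorem sq_inj2 (h2 : (2 : F) = 0) {x y : F} (h : x^2 = y^2) : x = y := by
  have hx : (x + y)^2 = 0 := by
    rw [add_sq2 h2, h, ← two_mul, h2, zero_mul]
  have h3 := pow_eq_zero_iff (n := 2) (by norm_num) |>.mp hx
  have h4 : x = -y := by linear_combination h3
  rw [h4, neg_eq_self2 h2]

/-- Frobenius as a ring hom (char 2). -/
def frobF (h2 : (2 : F) = 0) : F →+* F where
  toFun x := x^2
  map_one' := one_pow 2
  map_mul' x y := mul_pow x y 2
  map_zero' := zero_pow two_ne_zero
  map_add' x y := add_sq2 h2 x y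

/-- The subfield of squares. -/
def K2 (h2 : (2 : F) = 0) : Subfield F := (frobF h2).fieldRange

theorem mem_K2 (h2 : (2 : F) = 0) {y : F} : y ∈ K2 h2 ↔ ∃ x : F, x^2 = y := by
  simp [K2, RingHom.mem_fieldRange, frobF]

theorem sq_mem_K2 (h2 : (2 : F) = 0) (x : F) : x^2 ∈ K2 h2 := (mem_K2 h2).mpr ⟨x, rfl⟩

/-- Frobenius as ring hom into K2. -/
def frHom (h2 : (2 : F) = 0) : F →+* K2 h2 where
  toFun x := ⟨x^2, sq_mem_K2 h2 x⟩
  map_one' := by ext; simp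
  map_mul' x y := by ext; simp [mul_pow]
  map_zero' := by ext; simp
  map_add' x y := by ext; exact add_sq2 h2 x y

theorem frHom_bij (h2 : (2 : F) = 0) : Function.Bijective (frHom h2) := by
  constructor
  · intro x y hxy
    exact sq_inj2 h2 (by simpa [Subtype.ext_iff, frHom] using hxy)
  · rintro ⟨y, hy⟩
    obtain ⟨x, hx⟩ := (mem_K2 h2).mp hy
    exact ⟨x, by simp [Subtype.ext_iff, frHom, hx]⟩

/-- Frobenius as ring equiv onto K2. -/
noncomputable def frE (h2 : (2 : F) = 0) : F ≃+* K2 h2 :=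
  RingEquiv.ofBijective (frHom h2) (frHom_bij h2)

@[simp] theorem frE_apply (h2 : (2 : F) = 0) (x : F) : (frE h2 x : F) = x^2 := rfl

theorem frE_symm_spec (h2 : (2 : F) = 0) (c : K2 h2) : (frE h2).symm c ^ 2 = (c : F) :=
  congrArg Subtype.val ((frE h2).apply_symm_apply c)


set_option synthInstance.maxHeartbeats 1000000
set_option maxHeartbeats 1000000

variable (h2 : (2 : F) = 0)

/-- The K2-linear map attached to a diagonal form. -/
def Tl {n : ℕ} (d : Fin n → F) : (Fin n → K2 h2) →ₗ[K2 h2] F where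
  toFun w := ∑ i, (w i : F) * d i
  map_add' w w' := by
    simp [add_mul, Finset.sum_add_distrib]
  map_smul' c w := by
    simp only [Pi.smul_apply, smul_eq_mul, RingHom.id_apply, Subfield.smul_def,
      Finset.smul_sum]
    refine Finset.sum_congr rfl fun i _ => ?_
    push_cast
    ring

theorem Tl_apply {n : ℕ} (d : Fin n → F) (w : Fin n → K2 h2) :
    Tl h2 d w = ∑ i, (w i : F) * d i := rfl

/-- The coordinatewise Frobenius. -/
noncomputable def Phi {n : ℕ} (v : Fin n → F) : Fin n → K2 h2 := fun i => frE h2 (v i)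

noncomputable def PhiInv {n : ℕ} (w : Fin n → K2 h2) : Fin n → F := fun i => (frE h2).symm (w i)

@[simp] theorem Phi_PhiInv {n : ℕ} (w : Fin n → K2 h2) : Phi h2 (PhiInv h2 w) = w := by
  funext i; simp [Phi, PhiInv]

@[simp] theorem PhiInv_Phi {n : ℕ} (v : Fin n → F) : PhiInv h2 (Phi h2 v) = v := by
  funext i; simp [Phi, PhiInv]

theorem Phi_add {n : ℕ} (v v' : Fin n → F) : Phi h2 (v + v') = Phi h2 v + Phi h2 v' := by
  funext i; simp [Phi, map_add]

theorem PhiInv_add {n : ℕ} (w w' : Fin n → K2 h2) :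
    PhiInv h2 (w + w') = PhiInv h2 w + PhiInv h2 w' := by
  funext i; simp [PhiInv, map_add]

theorem Phi_smul {n : ℕ} (c : F) (v : Fin n → F) :
    Phi h2 (c • v) = frE h2 c • Phi h2 v := by
  funext i
  simp only [Phi, Pi.smul_apply, smul_eq_mul, map_mul]

theorem PhiInv_smul {n : ℕ} (c : K2 h2) (w : Fin n → K2 h2) :
    PhiInv h2 (c • w) = (frE h2).symm c • PhiInv h2 w := by
  funext i
  simp only [PhiInv, Pi.smul_apply, smul_eq_mul, map_mul]

theorem qf_eq_Tl {n : ℕ} (d : Fin n → F) (v : Fin n → F) :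
    qf F d v = Tl h2 d (Phi h2 v) := by
  simp only [qf, Tl_apply, Phi, frE_apply]
  exact Finset.sum_congr rfl fun i _ => mul_comm _ _

theorem Tl_eq_qf {n : ℕ} (d : Fin n → F) (w : Fin n → K2 h2) :
    Tl h2 d w = qf F d (PhiInv h2 w) := by
  rw [qf_eq_Tl h2, Phi_PhiInv]

/-- Anisotropy is injectivity of Tl. -/
theorem anis_iff_inj {n : ℕ} (d : Fin n → F) :
    Anis F d ↔ Function.Injective (Tl h2 d) := by
  rw [injective_iff_map_eq_zero]
  constructor
  · intro h w hw
    rw [Tl_eq_qf] at hw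
    have h3 := h _ hw
    have h4 : Phi h2 (PhiInv h2 w) = Phi h2 0 := by rw [h3]
    rw [Phi_PhiInv] at h4
    rw [h4]
    funext i; simp [Phi]
  · intro h v hv
    rw [qf_eq_Tl h2] at hv
    have h3 := h _ hv
    have h4 : PhiInv h2 (Phi h2 v) = PhiInv h2 0 := by rw [h3]
    rw [PhiInv_Phi] at h4
    rw [h4]
    funext i; simp [PhiInv]

theorem range_Tl {n : ℕ} (d : Fin n → F) :
    LinearMap.range (Tl h2 d) = Submodule.span (K2 h2) (Set.range d) := by
  apply le_antisymm
  · rintro x ⟨w, rfl⟩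
    rw [Tl_apply]
    refine Submodule.sum_mem _ fun i _ => ?_
    rw [← smul_eq_mul, ← Subfield.smul_def]
    exact Submodule.smul_mem _ _ (Submodule.subset_span ⟨i, rfl⟩)
  · rw [Submodule.span_le]
    rintro x ⟨i, rfl⟩
    refine ⟨Pi.single i 1, ?_⟩
    rw [Tl_apply, Finset.sum_eq_single i]
    · simp
    · intro j _ hj
      simp [Pi.single_apply, hj]
    · intro hi
      exact absurd (Finset.mem_univ i) hi

theorem Dset_eq_range_Tl {n : ℕ} (d : Fin n → F) :
    Dset F d = ↑(LinearMap.range (Tl h2 d)) := by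
  ext x
  constructor
  · rintro ⟨v, rfl⟩
    exact ⟨Phi h2 v, (qf_eq_Tl h2 d v).symm⟩
  · rintro ⟨w, rfl⟩
    exact ⟨PhiInv h2 w, (Tl_eq_qf h2 d w).symm⟩

/-- Bridge: isometry is equivalence of Tl maps. -/
theorem isom_iff {n m : ℕ} (d : Fin n → F) (e : Fin m → F) :
    Isom F d e ↔ ∃ ψ : (Fin n → K2 h2) ≃ₗ[K2 h2] (Fin m → K2 h2),
      ∀ w, Tl h2 e (ψ w) = Tl h2 d w := by
  constructor
  · rintro ⟨φ, hφ⟩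
    refine ⟨{ toFun := fun w => Phi h2 (φ (PhiInv h2 w))
              invFun := fun w => Phi h2 (φ.symm (PhiInv h2 w))
              left_inv := fun w => by simp
              right_inv := fun w => by simp
              map_add' := fun w w' => by
                rw [PhiInv_add, map_add, Phi_add]
              map_smul' := fun c w => by
                rw [PhiInv_smul, map_smul, Phi_smul, RingHom.id_apply,
                  RingEquiv.apply_symm_apply] },
            fun w => ?_⟩
    show Tl h2 e (Phi h2 (φ (PhiInv h2 w))) = Tl h2 d w
    rw [← qf_eq_Tl, hφ, qf_eq_Tl h2, Phi_PhiInv]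
  · rintro ⟨ψ, hψ⟩
    refine ⟨{ toFun := fun v => PhiInv h2 (ψ (Phi h2 v))
              invFun := fun v => PhiInv h2 (ψ.symm (Phi h2 v))
              left_inv := fun v => by simp
              right_inv := fun v => by simp
              map_add' := fun v v' => by
                rw [Phi_add, map_add, PhiInv_add]
              map_smul' := fun c v => by
                rw [Phi_smul, map_smul, PhiInv_smul, RingHom.id_apply,
                  RingEquiv.symm_apply_apply] },
            fun v => ?_⟩
    show qf F e (PhiInv h2 (ψ (Phi h2 v))) = qf F d v
    rw [qf_eq_Tl h2 e, Phi_PhiInv, hψ, ← qf_eq_Tl]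
theorem Tl_zero {n : ℕ} (w : Fin n → K2 h2) : Tl h2 (fun _ => (0:F)) w = 0 := by
  simp [Tl_apply]

theorem Tl_append {n m : ℕ} (d : Fin n → F) (e : Fin m → F) (w : Fin (n + m) → K2 h2) :
    Tl h2 (Fin.append d e) w =
      Tl h2 d (fun i => w (Fin.castAdd m i)) + Tl h2 e (fun j => w (Fin.natAdd n j)) := by
  rw [Tl_apply, Fin.sum_univ_add]
  simp [Tl_apply, Fin.append_left, Fin.append_right]

theorem Tl_append_append {n m : ℕ} (d : Fin n → F) (e : Fin m → F)
    (u : Fin n → K2 h2) (v : Fin m → K2 h2) :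
    Tl h2 (Fin.append d e) (Fin.append u v) = Tl h2 d u + Tl h2 e v := by
  rw [Tl_append]
  congr 1
  · exact congrArg _ (funext fun i => Fin.append_left u v i)
  · exact congrArg _ (funext fun j => Fin.append_right u v j)

theorem range_Tl_append_zero {k t : ℕ} (η : Fin t → F) :
    LinearMap.range (Tl h2 (Fin.append (fun _ : Fin k => (0:F)) η)) =
      LinearMap.range (Tl h2 η) := by
  ext x
  constructor
  · rintro ⟨w, rfl⟩
    refine ⟨fun j => w (Fin.natAdd k j), ?_⟩
    rw [Tl_append, Tl_zero, zero_add]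
  · rintro ⟨w, rfl⟩
    refine ⟨Fin.append 0 w, ?_⟩
    rw [Tl_append_append, Tl_zero, zero_add]

theorem Tl_smul {n : ℕ} (a : F) (d : Fin n → F) (w : Fin n → K2 h2) :
    Tl h2 (fun i => a * d i) w = a * Tl h2 d w := by
  rw [Tl_apply, Tl_apply, Finset.mul_sum]
  exact Finset.sum_congr rfl fun i _ => by ring

theorem range_Tl_smul {n : ℕ} (a : F) (d : Fin n → F) :
    LinearMap.range (Tl h2 (fun i => a * d i)) =
      Submodule.map (LinearMap.mulLeft (K2 h2) a) (LinearMap.range (Tl h2 d)) := by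
  ext x
  constructor
  · rintro ⟨w, rfl⟩
    exact ⟨Tl h2 d w, ⟨w, rfl⟩, (Tl_smul h2 a d w).symm⟩
  · rintro ⟨y, ⟨w, rfl⟩, rfl⟩
    exact ⟨w, Tl_smul h2 a d w⟩

theorem tens_pair {n m : ℕ} (q : Fin n → F) (p : Fin m → F) (i : Fin n) (j : Fin m) :
    tens F q p (finProdFinEquiv (i, j)) = q i * p j := by
  simp [tens]

theorem range_tens {n m : ℕ} (q : Fin n → F) (p : Fin m → F) :
    Set.range (tens F q p) = Set.range (fun ij : Fin n × Fin m => q ij.1 * p ij.2) := by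
  ext x
  constructor
  · rintro ⟨c, rfl⟩
    exact ⟨finProdFinEquiv.symm c, rfl⟩
  · rintro ⟨ij, rfl⟩
    exact ⟨finProdFinEquiv (ij.1, ij.2), by simp [tens]⟩

theorem Tl_tens {n m : ℕ} (q : Fin n → F) (p : Fin m → F) (w : Fin (n * m) → K2 h2) :
    Tl h2 (tens F q p) w =
      ∑ i : Fin n, ∑ j : Fin m, ((w (finProdFinEquiv (i, j)) : F)) * (q i * p j) := by
  rw [Tl_apply, ← Equiv.sum_comp finProdFinEquiv (fun x => ((w x : F)) * tens F q p x),
    Fintype.sum_prod_type]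
  exact Finset.sum_congr rfl fun i _ => Finset.sum_congr rfl fun j _ => by
    rw [tens_pair]

/-- Criterion: two injective Tl maps with the same range give an isometry. -/
theorem exists_equiv_of_inj {n m : ℕ} (d : Fin n → F) (e : Fin m → F)
    (hd : Function.Injective (Tl h2 d)) (he : Function.Injective (Tl h2 e))
    (hr : LinearMap.range (Tl h2 d) = LinearMap.range (Tl h2 e)) :
    Isom F d e := by
  rw [isom_iff h2]
  let e1 := LinearEquiv.ofInjective (Tl h2 d) hd
  let e2 := LinearEquiv.ofInjective (Tl h2 e) he
  let c := LinearEquiv.ofEq _ _ hr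
  refine ⟨(e1.trans c).trans e2.symm, fun w => ?_⟩
  have h1 : Tl h2 e (e2.symm (c (e1 w))) = ((e2 (e2.symm (c (e1 w)))) : F) := by
    rw [LinearEquiv.ofInjective_apply]
  rw [show ((e1.trans c).trans e2.symm) w = e2.symm (c (e1 w)) from rfl, h1,
    e2.apply_symm_apply, LinearEquiv.coe_ofEq_apply, LinearEquiv.ofInjective_apply]
/-- Append as a linear equivalence. -/
def appendLEquiv (R : Type) [Semiring R] (k t : ℕ) :
    ((Fin k → R) × (Fin t → R)) ≃ₗ[R] (Fin (k + t) → R) where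
  toFun uv := Fin.append uv.1 uv.2
  invFun w := (fun i => w (Fin.castAdd t i), fun j => w (Fin.natAdd k j))
  left_inv uv := by
    ext i
    · exact Fin.append_left _ _ i
    · exact Fin.append_right _ _ i
  right_inv w := Fin.append_castAdd_natAdd
  map_add' uv uv' := by
    funext j
    refine Fin.addCases (fun i => ?_) (fun i => ?_) j <;>
      simp [Fin.append_left, Fin.append_right]
  map_smul' c uv := by
    funext j
    refine Fin.addCases (fun i => ?_) (fun i => ?_) j <;>
      simp [Fin.append_left, Fin.append_right]

@[simp] theorem appendLEquiv_apply (R : Type) [Semiring R] (k t : ℕ)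
    (u : Fin k → R) (v : Fin t → R) :
    appendLEquiv R k t (u, v) = Fin.append u v := rfl

/-- Existence of the isometry with the anisotropic part plus zeros. -/
theorem exists_isom_append_zero {N t k : ℕ} (d : Fin N → F) (η : Fin t → F)
    (hη : Function.Injective (Tl h2 η))
    (hr : LinearMap.range (Tl h2 η) = LinearMap.range (Tl h2 d))
    (hk : k + t = N) :
    Isom F d (Fin.append (fun _ : Fin k => (0:F)) η) := by
  rw [isom_iff h2]
  set f := Tl h2 d with hf
  obtain ⟨C, hC⟩ := Submodule.exists_isCompl (LinearMap.ker f)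
  let ge := LinearEquiv.ofInjective (Tl h2 η) hη
  let hmap : (Fin N → K2 h2) →ₗ[K2 h2] (Fin t → K2 h2) :=
    ge.symm.toLinearMap ∘ₗ
      (LinearMap.codRestrict (LinearMap.range (Tl h2 η)) f
        (fun w => hr ▸ LinearMap.mem_range_self f w))
  have hmap_spec : ∀ w, Tl h2 η (hmap w) = f w := by
    intro w
    have h1 : Tl h2 η (ge.symm ⟨f w, hr ▸ LinearMap.mem_range_self f w⟩) =
        ((ge (ge.symm ⟨f w, hr ▸ LinearMap.mem_range_self f w⟩)) : F) := by
      rw [LinearEquiv.ofInjective_apply]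
    rw [show hmap w = ge.symm ⟨f w, hr ▸ LinearMap.mem_range_self f w⟩ from rfl, h1,
      ge.apply_symm_apply]
  have hrangerank : Module.finrank (K2 h2) (LinearMap.range f) = t := by
    rw [← hr, ← ge.finrank_eq, Module.finrank_fin_fun]
  have hN : Module.finrank (K2 h2) (Fin N → K2 h2) = N := Module.finrank_fin_fun _
  have hrank := LinearMap.finrank_range_add_finrank_ker f
  rw [hN, hrangerank] at hrank
  have hker : Module.finrank (K2 h2) (LinearMap.ker f) = k := by omega
  let kequiv : (LinearMap.ker f) ≃ₗ[K2 h2] (Fin k → K2 h2) :=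
    LinearEquiv.ofFinrankEq _ _ (by rw [hker, Module.finrank_fin_fun])
  let kproj := Submodule.linearProjOfIsCompl (LinearMap.ker f) C hC
  let Ψ : (Fin N → K2 h2) →ₗ[K2 h2] (Fin (k + t) → K2 h2) :=
    (appendLEquiv (K2 h2) k t).toLinearMap ∘ₗ
      (LinearMap.prod (kequiv.toLinearMap ∘ₗ kproj) hmap)
  have hΨ_apply : ∀ w, Ψ w = Fin.append (kequiv (kproj w)) (hmap w) := fun w => rfl
  have hΨval : ∀ w, Tl h2 (Fin.append (fun _ : Fin k => (0:F)) η) (Ψ w) = f w := by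
    intro w
    rw [hΨ_apply, Tl_append_append, Tl_zero, zero_add, hmap_spec]
  have hΨinj : Function.Injective Ψ := by
    rw [injective_iff_map_eq_zero]
    intro w hw
    have h1 : Fin.append (kequiv (kproj w)) (hmap w) = 0 := by rw [← hΨ_apply, hw]
    have h2a : kequiv (kproj w) = 0 := by
      funext i
      have := congrFun h1 (Fin.castAdd t i)
      rwa [Fin.append_left] at this
    have h2b : hmap w = 0 := by
      funext j
      have := congrFun h1 (Fin.natAdd k j)
      rwa [Fin.append_right] at this
    have h3 : f w = 0 := by rw [← hmap_spec w, h2b, map_zero]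
    have h4 : w ∈ LinearMap.ker f := h3
    have h5 : kproj w = ⟨w, h4⟩ :=
      Submodule.linearProjOfIsCompl_apply_left hC ⟨w, h4⟩
    have h6 : kproj w = 0 := by
      apply kequiv.injective
      rw [h2a, map_zero]
    rw [h5] at h6
    exact congrArg Subtype.val h6
  have hdim : Module.finrank (K2 h2) (Fin N → K2 h2) =
      Module.finrank (K2 h2) (Fin (k + t) → K2 h2) := by
    rw [Module.finrank_fin_fun, Module.finrank_fin_fun, hk]
  refine ⟨Ψ.linearEquivOfInjective hΨinj hdim, fun w => ?_⟩
  rw [LinearMap.linearEquivOfInjective_apply, hΨval]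
theorem coeff_mem_Dset {n : ℕ} (d : Fin n → F) (i : Fin n) : d i ∈ Dset F d := by
  refine ⟨Pi.single i 1, ?_⟩
  rw [qf, Finset.sum_eq_single i]
  · simp
  · intro j _ hj
    simp [Pi.single_apply, hj]
  · intro hi
    exact absurd (Finset.mem_univ i) hi

theorem anis_coeff_ne_zero {n : ℕ} {d : Fin n → F} (h : Anis F d) (i : Fin n) : d i ≠ 0 := by
  intro h0
  obtain ⟨v, hv⟩ := coeff_mem_Dset d i
  have hv0 : qf F d (Pi.single i (1:F)) = 0 := by
    rw [qf, Finset.sum_eq_single i]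
    · simp [h0]
    · intro j _ hj
      simp [Pi.single_apply, hj]
    · intro hi
      exact absurd (Finset.mem_univ i) hi
  have := congrFun (h _ hv0) i
  simp at this

theorem coeff_mem_range_Tl {n : ℕ} (d : Fin n → F) (i : Fin n) :
    d i ∈ LinearMap.range (Tl h2 d) := by
  rw [range_Tl]
  exact Submodule.subset_span ⟨i, rfl⟩

theorem sq_mem_normField {n : ℕ} (p : Fin n → F) (x : F) : x^2 ∈ normField F p :=
  Subfield.subset_closure (Or.inl ⟨x, rfl⟩)

theorem ratio_mem_normField {n : ℕ} (p : Fin n → F) {c b : F}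
    (hc : c ∈ Dset F p) (hb : b ∈ Dset F p) (hb0 : b ≠ 0) : c / b ∈ normField F p :=
  Subfield.subset_closure (Or.inr ⟨c, hc, b, hb, hb0, rfl⟩)

theorem mulLeft_injective {a : F} (ha : a ≠ 0) :
    Function.Injective (LinearMap.mulLeft (K2 h2) a) := by
  intro x y hxy
  simp only [LinearMap.mulLeft_apply] at hxy
  exact mul_left_cancel₀ ha hxy

theorem finrank_map_mulLeft {a : F} (ha : a ≠ 0) (S : Submodule (K2 h2) F) :
    Module.finrank (K2 h2) (Submodule.map (LinearMap.mulLeft (K2 h2) a) S) =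
      Module.finrank (K2 h2) S :=
  ((Submodule.equivMapOfInjective _ (mulLeft_injective h2 ha) S).finrank_eq).symm

theorem mem_map_mulLeft {a x : F} {S : Submodule (K2 h2) F} :
    x ∈ Submodule.map (LinearMap.mulLeft (K2 h2) a) S ↔ ∃ y ∈ S, a * y = x := by
  simp [Submodule.mem_map, LinearMap.mulLeft_apply]

/-- Products of represented values lie in the range of the tensor product. -/
theorem mul_mem_tens {nq np : ℕ} (q : Fin nq → F) (p : Fin np → F) {c x : F}
    (hc : c ∈ LinearMap.range (Tl h2 p)) (hx : x ∈ LinearMap.range (Tl h2 q)) :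
    c * x ∈ LinearMap.range (Tl h2 (tens F q p)) := by
  obtain ⟨wc, rfl⟩ := hc
  obtain ⟨wx, rfl⟩ := hx
  rw [range_Tl, Tl_apply, Tl_apply, Finset.sum_mul_sum]
  refine Submodule.sum_mem _ fun j _ => Submodule.sum_mem _ fun i _ => ?_
  have h1 : ((wc j : F) * p j) * ((wx i : F) * q i) = (wc j * wx i) • (q i * p j) := by
    rw [Subfield.smul_def, smul_eq_mul]
    push_cast
    ring
  rw [h1]
  exact Submodule.smul_mem _ _
    (Submodule.subset_span ⟨finProdFinEquiv (i, j), tens_pair q p i j⟩)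

theorem coeff_tens_mem {nq np : ℕ} (q : Fin nq → F) (p : Fin np → F) (i : Fin nq) (j : Fin np) :
    q i * p j ∈ LinearMap.range (Tl h2 (tens F q p)) := by
  rw [← tens_pair q p i j]
  exact coeff_mem_range_Tl h2 _ _

/-- The stabilizer of the range of `Tl q` is a subfield. -/
noncomputable def stabSF {n : ℕ} (d : Fin n → F) : Subfield F where
  carrier := {ν | ∀ x ∈ LinearMap.range (Tl h2 d), ν * x ∈ LinearMap.range (Tl h2 d)}
  mul_mem' {ν ν'} hν hν' x hx := by
    rw [mul_assoc]
    exact hν _ (hν' x hx)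
  one_mem' x hx := by rwa [one_mul]
  add_mem' {ν ν'} hν hν' x hx := by
    rw [add_mul]
    exact Submodule.add_mem _ (hν x hx) (hν' x hx)
  zero_mem' x hx := by
    rw [zero_mul]
    exact Submodule.zero_mem _
  neg_mem' {ν} hν := by
    rwa [neg_eq_self2 h2]
  inv_mem' ν hν := by
    rcases eq_or_ne ν 0 with rfl | hν0
    · rw [inv_zero]
      intro x hx
      rw [zero_mul]
      exact Submodule.zero_mem _
    · intro x hx
      have hle : Submodule.map (LinearMap.mulLeft (K2 h2) ν) (LinearMap.range (Tl h2 d)) ≤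
          LinearMap.range (Tl h2 d) := by
        rintro y ⟨z, hz, rfl⟩
        exact hν z hz
      have heq : Submodule.map (LinearMap.mulLeft (K2 h2) ν) (LinearMap.range (Tl h2 d)) =
          LinearMap.range (Tl h2 d) :=
        Submodule.eq_of_le_of_finrank_le hle (le_of_eq (finrank_map_mulLeft h2 hν0 _).symm)
      have : x ∈ Submodule.map (LinearMap.mulLeft (K2 h2) ν) (LinearMap.range (Tl h2 d)) := by
        rw [heq]; exact hx
      obtain ⟨y, hy, hyx⟩ := (mem_map_mulLeft h2).mp this
      have : ν⁻¹ * x = y := by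
        field_simp at hyx ⊢
        rw [← hyx]
      rwa [this]
theorem finrank_range_Tl {n : ℕ} (d : Fin n → F) (hd : Function.Injective (Tl h2 d)) :
    Module.finrank (K2 h2) (LinearMap.range (Tl h2 d)) = n := by
  rw [← (LinearEquiv.ofInjective _ hd).finrank_eq, Module.finrank_fin_fun]

theorem range_eq_of_isom {n m : ℕ} {d : Fin n → F} {e : Fin m → F} (h : Isom F d e) :
    LinearMap.range (Tl h2 e) = LinearMap.range (Tl h2 d) := by
  obtain ⟨ψ, hψ⟩ := (isom_iff h2 d e).mp h
  apply le_antisymm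
  · rintro x ⟨w, rfl⟩
    exact ⟨ψ.symm w, by rw [← hψ (ψ.symm w), ψ.apply_symm_apply]⟩
  · rintro x ⟨w, rfl⟩
    exact ⟨ψ w, hψ w⟩

theorem inj_of_isom_inj {n m : ℕ} {d : Fin n → F} {e : Fin m → F} (h : Isom F d e)
    (he : Function.Injective (Tl h2 e)) : Function.Injective (Tl h2 d) := by
  obtain ⟨ψ, hψ⟩ := (isom_iff h2 d e).mp h
  rw [injective_iff_map_eq_zero] at he ⊢
  intro w hw
  have h1 : Tl h2 e (ψ w) = 0 := by rw [hψ, hw]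
  have h3 := congrArg ψ.symm (he _ h1)
  rwa [ψ.symm_apply_apply, map_zero] at h3

/-- Key stability: if `a • (q ⊗ p)` has the same values as `q` then `N(p)` stabilizes `D(q)`. -/
theorem normField_le_stab {nq np : ℕ} (q : Fin nq → F) (p : Fin np → F)
    {a : F} (ha : a ≠ 0)
    (hM : Submodule.map (LinearMap.mulLeft (K2 h2) a)
        (LinearMap.range (Tl h2 (tens F q p))) = LinearMap.range (Tl h2 q)) :
    ∀ ν ∈ normField F p, ∀ x ∈ LinearMap.range (Tl h2 q),
      ν * x ∈ LinearMap.range (Tl h2 q) := by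
  have hle : normField F p ≤ stabSF h2 q := by
    rw [normField, Subfield.closure_le]
    rintro z (⟨x, rfl⟩ | ⟨c, hc, b, hb, hb0, rfl⟩)
    · intro y hy
      have hxy : x^2 * y = (⟨x^2, sq_mem_K2 h2 x⟩ : K2 h2) • y := by
        rw [Subfield.smul_def, smul_eq_mul]
      rw [hxy]
      exact Submodule.smul_mem _ _ hy
    · rw [Dset_eq_range_Tl h2] at hc hb
      have hfM : Module.finrank (K2 h2) (LinearMap.range (Tl h2 (tens F q p))) =
          Module.finrank (K2 h2) (LinearMap.range (Tl h2 q)) := by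
        rw [← hM, finrank_map_mulLeft h2 ha]
      have hbQ : Submodule.map (LinearMap.mulLeft (K2 h2) b)
          (LinearMap.range (Tl h2 q)) ≤ LinearMap.range (Tl h2 (tens F q p)) := by
        rintro y ⟨z, hz, rfl⟩
        exact mul_mem_tens h2 q p hb hz
      have heqb : Submodule.map (LinearMap.mulLeft (K2 h2) b)
          (LinearMap.range (Tl h2 q)) = LinearMap.range (Tl h2 (tens F q p)) := by
        apply Submodule.eq_of_le_of_finrank_le hbQ
        rw [hfM, finrank_map_mulLeft h2 hb0]
      intro x hx
      have hcx : c * x ∈ LinearMap.range (Tl h2 (tens F q p)) := mul_mem_tens h2 q p hc hx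
      rw [← heqb] at hcx
      obtain ⟨y, hy, hyx⟩ := (mem_map_mulLeft h2).mp hcx
      have hfin : c / b * x = y := by
        field_simp
        rw [← hyx]
      rwa [hfin]
  exact fun ν hν => hle hν

/-- Divisibility by the norm form, from stability. -/
theorem divisible_construct {nq m : ℕ} (q : Fin nq → F) (π : Fin m → F) (N : Subfield F)
    (hq : Function.Injective (Tl h2 q)) (hπ : Function.Injective (Tl h2 π))
    (hπr : (LinearMap.range (Tl h2 π) : Set F) = ↑N)
    (hsqN : ∀ x : F, x^2 ∈ N)
    (hstab : ∀ ν ∈ N, ∀ x ∈ LinearMap.range (Tl h2 q),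
      ν * x ∈ LinearMap.range (Tl h2 q)) :
    Divisible F π q := by
  classical
  set Q := LinearMap.range (Tl h2 q) with hQdef
  set QN : Submodule N F := Submodule.span N (Set.range q) with hQNdef
  have hπmemN : ∀ i, π i ∈ N := fun i => by
    rw [← SetLike.mem_coe, ← hπr]
    exact coeff_mem_range_Tl h2 π i
  have hQN : ∀ x : F, x ∈ QN ↔ x ∈ Q := by
    intro x
    constructor
    · intro hx
      refine Submodule.span_induction (fun y hy => ?_) (Submodule.zero_mem Q)
        (fun y z _ _ hy hz => Submodule.add_mem Q hy hz)
        (fun c y _ hy => ?_) hx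
      · obtain ⟨i, rfl⟩ := hy
        exact coeff_mem_range_Tl h2 q i
      · have hcy : c • y = (c : F) * y := by rw [Subfield.smul_def, smul_eq_mul]
        rw [hcy]
        exact hstab c c.2 y hy
    · intro hx
      rw [hQdef, range_Tl] at hx
      refine Submodule.span_induction (fun y hy => Submodule.subset_span hy)
        (Submodule.zero_mem QN)
        (fun y z _ _ hy hz => Submodule.add_mem QN hy hz)
        (fun c y _ hy => ?_) hx
      have hcy : c • y = (⟨(c : F), by
          obtain ⟨t, ht⟩ := (mem_K2 h2).mp c.2
          rw [← ht]; exact hsqN t⟩ : N) • y := by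
        rw [Subfield.smul_def, Subfield.smul_def]
      rw [hcy]
      exact Submodule.smul_mem QN _ hy
  haveI : FiniteDimensional N QN := FiniteDimensional.span_of_finite N (Set.finite_range q)
  set k := Module.finrank N QN with hk
  set b : Module.Basis (Fin k) N QN := Module.finBasis N QN with hb
  set r : Fin k → F := fun j => (b j : F) with hr
  have hrQ : ∀ j, r j ∈ Q := fun j => (hQN _).mp (b j).2
  have hTinj : Function.Injective (Tl h2 (tens F π r)) := by
    rw [injective_iff_map_eq_zero]
    intro w hw
    rw [Tl_tens] at hw
    set ν : Fin k → N := fun j => ⟨Tl h2 π (fun i => w (finProdFinEquiv (i, j))), by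
      rw [← SetLike.mem_coe, ← hπr]; exact ⟨_, rfl⟩⟩ with hν
    have hval : ((∑ j, ν j • b j : QN) : F) = ∑ j, (ν j : F) * r j := by
      rw [AddSubmonoidClass.coe_finset_sum]
      exact Finset.sum_congr rfl fun j _ => by
        rw [Submodule.coe_smul, Subfield.smul_def, smul_eq_mul]
    have hswap : ∑ j, (ν j : F) * r j =
        ∑ i, ∑ j, ((w (finProdFinEquiv (i, j)) : F)) * (π i * r j) := by
      rw [Finset.sum_comm]
      refine Finset.sum_congr rfl fun j _ => ?_
      show Tl h2 π (fun i => w (finProdFinEquiv (i, j))) * r j = _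
      rw [Tl_apply, Finset.sum_mul]
      exact Finset.sum_congr rfl fun i _ => by ring
    have hsum : ∑ j, ν j • b j = 0 := by
      apply Subtype.ext
      rw [hval, hswap, hw]
      rfl
    have hν0 := Fintype.linearIndependent_iff.mp b.linearIndependent ν hsum
    funext x
    have hx : x = finProdFinEquiv ((finProdFinEquiv.symm x).1, (finProdFinEquiv.symm x).2) := by
      rw [Prod.mk.eta, Equiv.apply_symm_apply]
    have hcol : (fun i => w (finProdFinEquiv (i, (finProdFinEquiv.symm x).2))) = 0 := by
      apply (injective_iff_map_eq_zero _).mp hπ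
      have := hν0 (finProdFinEquiv.symm x).2
      exact congrArg Subtype.val this
    have := congrFun hcol (finProdFinEquiv.symm x).1
    rw [← hx] at this
    exact this
  have hrange : Q = LinearMap.range (Tl h2 (tens F π r)) := by
    apply le_antisymm
    · rw [hQdef, range_Tl, Submodule.span_le]
      rintro x ⟨i, rfl⟩
      have hqi : q i ∈ QN := Submodule.subset_span ⟨i, rfl⟩
      set z : QN := ⟨q i, hqi⟩ with hz
      have hzr := b.sum_repr z
      have hcoef : ∀ j, ∃ u : Fin m → K2 h2, Tl h2 π u = ((b.repr z j : N) : F) := by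
        intro j
        have hm : ((b.repr z j : N) : F) ∈ (LinearMap.range (Tl h2 π) : Set F) := by
          rw [hπr]; exact (b.repr z j).2
        exact hm
      choose u hu using hcoef
      have hval2 : ((∑ j, b.repr z j • b j : QN) : F) = ∑ j, ((b.repr z j : N) : F) * r j := by
        rw [AddSubmonoidClass.coe_finset_sum]
        exact Finset.sum_congr rfl fun j _ => by
          rw [Submodule.coe_smul, Subfield.smul_def, smul_eq_mul]
      have h1 : q i = ∑ j, ((b.repr z j : N) : F) * r j := by
        have h2c := congrArg Subtype.val hzr
        rw [hval2] at h2c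
        exact h2c.symm
      have hqi_eq : q i = ∑ j, ∑ i', ((u j i' : F)) * (π i' * r j) := by
        rw [h1]
        refine Finset.sum_congr rfl fun j _ => ?_
        rw [← hu j, Tl_apply, Finset.sum_mul]
        exact Finset.sum_congr rfl fun i' _ => by ring
      rw [SetLike.mem_coe, hqi_eq]
      refine Submodule.sum_mem _ fun j _ => Submodule.sum_mem _ fun i' _ => ?_
      have hs : ((u j i' : F)) * (π i' * r j) = (u j i') • (π i' * r j) := by
        rw [Subfield.smul_def, smul_eq_mul]
      rw [hs]
      exact Submodule.smul_mem _ _ (coeff_tens_mem h2 π r i' j)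
    · rw [range_Tl, Submodule.span_le, range_tens]
      rintro x ⟨ij, rfl⟩
      exact hstab (π ij.1) (hπmemN ij.1) (r ij.2) (hrQ ij.2)
  exact ⟨k, r, exists_equiv_of_inj h2 q (tens F π r) hq hTinj hrange⟩
theorem main (h2 : (2 : F) = 0) {nq np : ℕ}
    (hnq : 0 < nq) (hnp : 0 < np)
    (q : Fin nq → F) (p : Fin np → F) (hq : Anis F q) (hp : Anis F p)
    (s : ℕ) (a : Fin s → F) (haan : Anis F (qPfister F a))
    (hnorm : Dset F (qPfister F a) = (normField F p : Set F)) :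
    Divisible F (qPfister F a) q ↔
      ∃ (k : ℕ) (η : Fin k → F), IsAnisPart F η (tens F q p) ∧ Similar F η q := by
  set π := qPfister F a with hπdef
  have hπinj : Function.Injective (Tl h2 π) := (anis_iff_inj h2 π).mp haan
  have hqinj : Function.Injective (Tl h2 q) := (anis_iff_inj h2 q).mp hq
  have hπr : (LinearMap.range (Tl h2 π) : Set F) = ↑(normField F p) := by
    rw [← Dset_eq_range_Tl h2, hnorm]
  constructor
  · rintro ⟨k, r, hisom⟩
    have hrange : LinearMap.range (Tl h2 (tens F π r)) = LinearMap.range (Tl h2 q) :=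
      range_eq_of_isom h2 hisom
    have hstab : ∀ ν ∈ normField F p, ∀ x ∈ LinearMap.range (Tl h2 q),
        ν * x ∈ LinearMap.range (Tl h2 q) := by
      intro ν hν x hx
      rw [← hrange] at hx ⊢
      rw [range_Tl] at hx ⊢
      refine Submodule.span_induction (fun y hy => ?_)
        (by rw [mul_zero]; exact Submodule.zero_mem _)
        (fun y z _ _ hy hz => by rw [mul_add]; exact Submodule.add_mem _ hy hz)
        (fun c y _ hy => by
          rw [show ν * (c • y) = c • (ν * y) from by
            rw [Subfield.smul_def, Subfield.smul_def, smul_eq_mul, smul_eq_mul]; ring]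
          exact Submodule.smul_mem _ _ hy) hx
      obtain ⟨c0, rfl⟩ := hy
      have hy_eq : tens F π r c0 =
          π (finProdFinEquiv.symm c0).1 * r (finProdFinEquiv.symm c0).2 := rfl
      rw [hy_eq]
      have hmul : ν * π (finProdFinEquiv.symm c0).1 ∈ normField F p :=
        mul_mem hν (by rw [← SetLike.mem_coe, ← hπr]; exact coeff_mem_range_Tl h2 π _)
      rw [← SetLike.mem_coe, ← hπr] at hmul
      obtain ⟨u, hu⟩ := hmul
      have hexp : ν * (π (finProdFinEquiv.symm c0).1 * r (finProdFinEquiv.symm c0).2) =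
          ∑ i', ((u i' : F)) * (π i' * r (finProdFinEquiv.symm c0).2) := by
        rw [← mul_assoc, ← hu, Tl_apply, Finset.sum_mul]
        exact Finset.sum_congr rfl fun i' _ => by ring
      rw [hexp]
      refine Submodule.sum_mem _ fun i' _ => ?_
      rw [show ((u i' : F)) * (π i' * r (finProdFinEquiv.symm c0).2) =
          u i' • (π i' * r (finProdFinEquiv.symm c0).2) from by
        rw [Subfield.smul_def, smul_eq_mul]]
      exact Submodule.smul_mem _ _
        (Submodule.subset_span ⟨finProdFinEquiv (i', (finProdFinEquiv.symm c0).2),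
          tens_pair π r i' _⟩)
    set i0 : Fin np := ⟨0, hnp⟩ with hi0
    set p0 := p i0 with hp0def
    have hp0 : p0 ≠ 0 := anis_coeff_ne_zero hp i0
    set M := LinearMap.range (Tl h2 (tens F q p)) with hM
    have hMQ : Submodule.map (LinearMap.mulLeft (K2 h2) p0)
        (LinearMap.range (Tl h2 q)) = M := by
      apply le_antisymm
      · rintro x ⟨y, hy, rfl⟩
        show p0 * y ∈ M
        exact mul_mem_tens h2 q p (coeff_mem_range_Tl h2 p i0) hy
      · rw [hM, range_Tl, Submodule.span_le]
        rintro x ⟨c0, rfl⟩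
        rw [SetLike.mem_coe, mem_map_mulLeft h2]
        refine ⟨(p (finProdFinEquiv.symm c0).2 / p0) * q (finProdFinEquiv.symm c0).1,
          hstab _ (ratio_mem_normField p (coeff_mem_Dset p _) (coeff_mem_Dset p i0) hp0) _
            (coeff_mem_range_Tl h2 q _), ?_⟩
        show p0 * _ = tens F q p c0
        have hy_eq : tens F q p c0 =
            q (finProdFinEquiv.symm c0).1 * p (finProdFinEquiv.symm c0).2 := rfl
        rw [hy_eq]
        field_simp
    set η : Fin nq → F := fun i => p0 * q i with hη
    have hηinj : Function.Injective (Tl h2 η) := by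
      rw [injective_iff_map_eq_zero]
      intro w hw
      rw [show Tl h2 η w = p0 * Tl h2 q w from Tl_smul h2 p0 q w] at hw
      rcases mul_eq_zero.mp hw with h | h
      · exact absurd h hp0
      · rw [injective_iff_map_eq_zero] at hqinj
        exact hqinj w h
    have hηr : LinearMap.range (Tl h2 η) = M := by
      rw [show LinearMap.range (Tl h2 η) =
        Submodule.map (LinearMap.mulLeft (K2 h2) p0) (LinearMap.range (Tl h2 q)) from
        range_Tl_smul h2 p0 q, hMQ]
    have hkk : (nq * np - nq) + nq = nq * np := by
      have : nq ≤ nq * np := Nat.le_mul_of_pos_right nq hnp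
      omega
    have hIso := exists_isom_append_zero h2 (tens F q p) η hηinj (by rw [hηr, hM]) hkk
    refine ⟨nq, η, ⟨(anis_iff_inj h2 η).mpr hηinj, nq * np - nq, hIso⟩,
      p0⁻¹, inv_ne_zero hp0, ?_⟩
    have hsimp : (fun i => p0⁻¹ * η i) = q := funext fun i => by
      show p0⁻¹ * (p0 * q i) = q i
      field_simp
    rw [hsimp]
    exact ⟨LinearEquiv.refl _ _, fun v => rfl⟩
  · rintro ⟨k, η, ⟨hηAnis, kk, hIsoAP⟩, a0, ha0, hSim⟩
    have hη_range : LinearMap.range (Tl h2 η) =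
        LinearMap.range (Tl h2 (tens F q p)) := by
      have h1 := range_eq_of_isom h2 hIsoAP
      rw [range_Tl_append_zero] at h1
      exact h1
    have hQ_range : LinearMap.range (Tl h2 q) =
        Submodule.map (LinearMap.mulLeft (K2 h2) a0) (LinearMap.range (Tl h2 η)) := by
      have h1 := range_eq_of_isom h2 hSim
      rw [range_Tl_smul] at h1
      exact h1
    have hMm : Submodule.map (LinearMap.mulLeft (K2 h2) a0)
        (LinearMap.range (Tl h2 (tens F q p))) = LinearMap.range (Tl h2 q) := by
      rw [← hη_range]
      exact hQ_range.symm
    have hstab := normField_le_stab h2 q p ha0 hMm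
    exact divisible_construct h2 q π (normField F p) hqinj hπinj hπr
      (sq_mem_normField p) hstab
end QLin2

open QLin in
/-- Let `q` and `p` be nonzero anisotropic quasilinear quadratic forms
over a field `F` of characteristic `2`. Then `q` is divisible by the norm form of `p`
(the unique anisotropic quasi-Pfister form whose value set is the norm field `N(p)`)
if and only if the anisotropic part `(q ⊗ p)_an` is similar to `q`. -/
theorem statement6 (F : Type) [Field F] (h2 : (2 : F) = 0) {nq np : ℕ}
    (hnq : 0 < nq) (hnp : 0 < np)
    (q : Fin nq → F) (p : Fin np → F) (hq : Anis F q) (hp : Anis F p)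
    (s : ℕ) (a : Fin s → F) (ha : ∀ i, a i ≠ 0) (haan : Anis F (qPfister F a))
    (hnorm : Dset F (qPfister F a) = (normField F p : Set F)) :
    Divisible F (qPfister F a) q ↔
      ∃ (k : ℕ) (η : Fin k → F), IsAnisPart F η (tens F q p) ∧ Similar F η q :=
  QLin2.main h2 hnq hnp q p hq hp s a haan hnorm
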